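/- Let p be a binary word with exactly 2 runs. Then every p-optimal binary word (of any length n for which M_{n,p} ≥ 1) also has exactly 2 runs. -/

import Mathlib

/-- `occ p w` is the number of occurrences of `p` as a subsequence of `w`,
i.e. the number of choices of indices `i₁ < ⋯ < i_l` in `w` matching `p`. -/
def occ (p w : List Bool) : ℕ := w.sublists.count p

/-- `B n p k` is the number of binary words of length `n` with exactly `k` occurrences of `p`. -/
noncomputable def B (n : ℕ) (p : List Bool) (k : ℕ) : ℕ :=
  Nat.card {w : List Bool // w.length = n ∧ occ p w = k}

/-- The list of runs (maximal blocks of consecutive equal letters) of a binary word. -/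
def runs (p : List Bool) : List (List Bool) := p.splitBy (· == ·)

/-- The number of runs of a binary word. -/
def numRuns (p : List Bool) : ℕ := (runs p).length

/-- The number of runs of size `i` of a binary word. -/
def numRunsOfSize (p : List Bool) (i : ℕ) : ℕ := ((runs p).map List.length).count i

/-- `maxOcc n p` is the maximum number of occurrences of `p` among binary words of length `n`. -/
noncomputable def maxOcc (n : ℕ) (p : List Bool) : ℕ :=
  sSup {k | ∃ w : List Bool, w.length = n ∧ occ p w = k}

/-- `p` has an internal zero at `n` if the sequence `(B n p k)_{k ≥ 0}` has an internal zero. -/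
def HasInternalZeroAt (p : List Bool) (n : ℕ) : Prop :=
  ∃ k₁ k₂ k₃ : ℕ, k₁ < k₂ ∧ k₂ < k₃ ∧ B n p k₁ ≠ 0 ∧ B n p k₂ = 0 ∧ B n p k₃ ≠ 0

/-!
A word with two runs is `x^a (!x)^b`, i.e. `blockWord x a b`. If `w` has `m` letters `x` and
`n` letters `!x`, an occurrence of `x^a (!x)^b` in `w` is a choice of `a` of its `x`'s and `b` of
its `!x`'s with every chosen `x` before every chosen `!x`; so `c_p(w) ≤ C(m,a) C(n,b)`, with
equality for the sorted word `x^m (!x)^n`. If `w` is not sorted, a letter `!x` precedes some `x`,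
and once `a ≤ m` and `b ≤ n` some choice containing this pair is not an occurrence, so the
inequality is strict. An optimal word with `M ≥ 1` therefore has `a ≤ m`, `b ≤ n` and is sorted,
which makes it a word with two runs.
-/

def blockWord (x : Bool) (a b : ℕ) : List Bool := List.replicate a x ++ List.replicate b (!x)

theorem blockWord_succ_left (x : Bool) (a b : ℕ) : blockWord x (a + 1) b = x :: blockWord x a b :=
  rfl

theorem count_flatMap_pair {α : Type*} [DecidableEq α] (c : α) (q : List α) (L : List (List α)) :
    (L.flatMap fun s => [s, c :: s]).count q = L.count q + (L.map (c :: ·)).count q := by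
  induction L with
  | nil => simp
  | cons s L ih =>
    simp only [List.flatMap_cons, List.count_append, ih, List.map_cons, List.count_cons]
    split_ifs <;> simp_all <;> omega

theorem occ_cons (p w : List Bool) (b : Bool) :
    occ p (b :: w) = occ p w + (w.sublists.map (b :: ·)).count p := by
  rw [occ, List.sublists_cons, List.bind_eq_flatMap, count_flatMap_pair, occ]

theorem occ_nil_left (w : List Bool) : occ [] w = 1 := by
  induction w with
  | nil => rfl
  | cons b w ih => rw [occ_cons, ih, List.count_eq_zero.2 (by simp)]

theorem occ_cons_nil (a : Bool) (p : List Bool) : occ (a :: p) [] = 0 := by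
  simp [occ]

theorem occ_cons_cons (a b : Bool) (p w : List Bool) :
    occ (a :: p) (b :: w) = (if a = b then occ p w else 0) + occ (a :: p) w := by
  rw [occ_cons]
  split_ifs with h
  · subst h
    rw [List.count_map_of_injective _ _ List.cons_injective, add_comm]
    rfl
  · rw [List.count_eq_zero.2, add_zero, zero_add]
    simp only [List.mem_map]
    rintro ⟨s, -, hs⟩
    exact h (List.cons.inj hs).1.symm

theorem occ_replicate (n : ℕ) (x : Bool) (w : List Bool) :
    occ (List.replicate n x) w = (w.count x).choose n := by
  induction w generalizing n with
  | nil => cases n <;> simp [occ_nil_left, occ_cons_nil, List.replicate_succ]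
  | cons c w ih =>
    cases n with
    | zero => simp [occ_nil_left]
    | succ n =>
      rw [List.replicate_succ, occ_cons_cons, ← List.replicate_succ, ih, ih, List.count_cons]
      by_cases h : x = c
      · simp [h, Nat.choose_succ_succ']
      · simp [h, Ne.symm h]

theorem occ_blockWord_zero_left (x : Bool) (b : ℕ) (w : List Bool) :
    occ (blockWord x 0 b) w = (w.count (!x)).choose b :=
  occ_replicate b (!x) w

theorem occ_blockWord_succ_cons_self (x : Bool) (a b : ℕ) (w : List Bool) :
    occ (blockWord x (a + 1) b) (x :: w) =
      occ (blockWord x a b) w + occ (blockWord x (a + 1) b) w := by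
  simp only [blockWord, List.replicate_succ, List.cons_append, occ_cons_cons, if_true]

theorem occ_blockWord_succ_cons_not (x : Bool) (a b : ℕ) (w : List Bool) :
    occ (blockWord x (a + 1) b) ((!x) :: w) = occ (blockWord x (a + 1) b) w := by
  simp only [blockWord, List.replicate_succ, List.cons_append, occ_cons_cons]
  simp

theorem occ_blockWord_nil (x : Bool) (a b : ℕ) :
    occ (blockWord x (a + 1) b) [] = 0 := by
  simp [blockWord, List.replicate_succ, occ_cons_nil]

theorem count_cons_not_self (x : Bool) (w : List Bool) : ((!x) :: w).count x = w.count x :=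
  List.count_cons_of_ne (Bool.not_ne_self x)

theorem count_not_cons_self (x : Bool) (w : List Bool) : (x :: w).count (!x) = w.count (!x) :=
  List.count_cons_of_ne (Bool.not_ne_self x).symm

theorem occ_blockWord_le (x : Bool) (a b : ℕ) (w : List Bool) :
    occ (blockWord x a b) w ≤ (w.count x).choose a * (w.count (!x)).choose b := by
  induction w generalizing a with
  | nil => cases a <;> simp [occ_blockWord_zero_left, occ_blockWord_nil]
  | cons c w ih =>
    cases a with
    | zero => simp [occ_blockWord_zero_left]
    | succ a =>
      rcases Bool.eq_or_eq_not c x with rfl | rfl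
      · rw [occ_blockWord_succ_cons_self, List.count_cons_self, count_not_cons_self,
          Nat.choose_succ_succ', add_mul]
        exact add_le_add (ih a) (ih (a + 1))
      · rw [occ_blockWord_succ_cons_not, count_cons_not_self, List.count_cons_self]
        exact (ih (a + 1)).trans (Nat.mul_le_mul_left _ (Nat.choose_le_succ _ _))

theorem occ_blockWord_blockWord (x : Bool) (a b m n : ℕ) :
    occ (blockWord x a b) (blockWord x m n) = m.choose a * n.choose b := by
  induction m generalizing a with
  | zero =>
    cases a with
    | zero => rw [occ_blockWord_zero_left]; simp [blockWord]
    | succ a =>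
      have := occ_blockWord_le x (a + 1) b (blockWord x 0 n)
      simp_all [blockWord, List.count_replicate]
  | succ m ih =>
    cases a with
    | zero => rw [occ_blockWord_zero_left]; simp [blockWord, List.count_replicate]
    | succ a =>
      rw [blockWord_succ_left x m n, occ_blockWord_succ_cons_self, ih, ih, Nat.choose_succ_succ', add_mul]

theorem choose_lt_choose_succ {n k : ℕ} (hk : 1 ≤ k) (hkn : k ≤ n + 1) :
    n.choose k < (n + 1).choose k := by
  obtain ⟨k, rfl⟩ := Nat.exists_eq_add_of_le' hk
  rw [Nat.choose_succ_succ']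
  have := Nat.choose_pos (show k ≤ n by omega)
  omega

theorem occ_blockWord_lt (x : Bool) {a b : ℕ} {w : List Bool} (ha : 1 ≤ a) (hb : 1 ≤ b)
    (hxa : a ≤ w.count x) (hxb : b ≤ w.count (!x)) (hdesc : [!x, x].Sublist w) :
    occ (blockWord x a b) w < (w.count x).choose a * (w.count (!x)).choose b := by
  induction w generalizing a with
  | nil => simp at hdesc
  | cons c w ih =>
    obtain ⟨a, rfl⟩ := Nat.exists_eq_add_of_le' ha
    rcases Bool.eq_or_eq_not c x with rfl | rfl
    · have hdesc' : [!c, c].Sublist w := by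
        simpa [List.sublist_cons_iff, Bool.not_ne_self] using hdesc
      have hcw : 1 ≤ w.count c := List.count_pos_iff.2 (hdesc'.subset (by simp))
      rw [List.count_cons_self] at hxa ⊢
      rw [count_not_cons_self] at hxb ⊢
      rw [occ_blockWord_succ_cons_self, Nat.choose_succ_succ', add_mul]
      rcases Nat.lt_or_ge a (w.count c) with h | h
      · exact add_lt_add_of_le_of_lt (occ_blockWord_le c a b w) (ih (by omega) h hxb hdesc')
      · exact add_lt_add_of_lt_of_le (ih (by omega) (by omega) hxb hdesc')
          (occ_blockWord_le c (a + 1) b w)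
    · rw [count_cons_not_self] at hxa ⊢
      rw [List.count_cons_self] at hxb ⊢
      rw [occ_blockWord_succ_cons_not]
      calc occ (blockWord x (a + 1) b) w
          ≤ (w.count x).choose (a + 1) * (w.count (!x)).choose b := occ_blockWord_le x _ b w
        _ < (w.count x).choose (a + 1) * (w.count (!x) + 1).choose b :=
          Nat.mul_lt_mul_of_pos_left (choose_lt_choose_succ hb hxb) (Nat.choose_pos hxa)

theorem eq_blockWord_or_sublist (x : Bool) (w : List Bool) :
    w = blockWord x (w.count x) (w.count (!x)) ∨ [!x, x].Sublist w := by
  induction w with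
  | nil => simp [blockWord]
  | cons c w ih =>
    rcases ih with hw | hdesc
    · rcases Bool.eq_or_eq_not c x with rfl | rfl
      · left
        rw [List.count_cons_self, count_not_cons_self, blockWord_succ_left, ← hw]
      · rcases Nat.eq_zero_or_pos (w.count x) with h | h
        · left
          rw [count_cons_not_self, List.count_cons_self, h, blockWord, List.replicate_succ]
          rw [h] at hw
          simpa [blockWord] using hw
        · exact Or.inr
            (List.cons_sublist_cons.2 (List.singleton_sublist.2 (List.count_pos_iff.1 h)))
    · exact Or.inr (hdesc.cons c)

theorem runs_replicate {n : ℕ} (hn : 1 ≤ n) (c : Bool) :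
    runs (List.replicate n c) = [List.replicate n c] :=
  List.splitBy_of_isChain (by simp; omega) (List.isChain_replicate_of_rel n (by simp))

theorem numRuns_blockWord (x : Bool) {a b : ℕ} (ha : 1 ≤ a) (hb : 1 ≤ b) :
    numRuns (blockWord x a b) = 2 := by
  have hsplit := List.splitBy_append (r := (· == ·)) (l := List.replicate a x)
    (m := List.replicate b (!x)) (by simp [List.getLast?_replicate, List.head?_replicate])
  rw [numRuns, runs, blockWord, hsplit, ← runs, ← runs, runs_replicate ha, runs_replicate hb]
  rfl

theorem exists_eq_replicate_of_mem_runs {w m : List Bool} (hm : m ∈ runs w) :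
    ∃ c n, 1 ≤ n ∧ m = List.replicate n c := by
  obtain ⟨c, m', rfl⟩ := List.exists_cons_of_ne_nil (List.ne_nil_of_mem_splitBy hm)
  have hchain : (c :: m').IsChain (· = ·) := (List.isChain_of_mem_splitBy hm).imp (by simp)
  exact ⟨c, m'.length + 1, by omega, List.isChain_eq_iff_eq_replicate.1 hchain c rfl⟩

theorem exists_eq_blockWord_of_numRuns_eq_two {p : List Bool} (hp : numRuns p = 2) :
    ∃ x a b, 1 ≤ a ∧ 1 ≤ b ∧ p = blockWord x a b := by
  obtain ⟨r₁, r₂, hr⟩ := List.length_eq_two.1 hp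
  obtain ⟨x, a, ha, rfl⟩ := exists_eq_replicate_of_mem_runs (hr ▸ List.mem_cons_self : r₁ ∈ runs p)
  obtain ⟨y, b, hb, rfl⟩ :=
    exists_eq_replicate_of_mem_runs (hr ▸ List.mem_cons_of_mem _ List.mem_cons_self : r₂ ∈ runs p)
  obtain ⟨hflat, -, -, hsep⟩ := List.splitBy_eq_iff.1 hr
  have hxy : y = !x := by
    obtain ⟨_, _, h⟩ := List.isChain_pair.1 hsep
    simp only [List.getLast_replicate, List.head_replicate, beq_eq_false_iff_ne] at h
    exact Bool.eq_not_of_ne (Ne.symm h)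
  exact ⟨x, a, b, ha, hb, by simpa [blockWord, hxy] using hflat⟩

theorem occ_le_two_pow (p w : List Bool) : occ p w ≤ 2 ^ w.length :=
  List.count_le_length.trans (List.length_sublists w).le

theorem occ_le_maxOcc (p w : List Bool) : occ p w ≤ maxOcc w.length p :=
  le_csSup ⟨2 ^ w.length, by rintro _ ⟨v, hv, rfl⟩; exact hv ▸ occ_le_two_pow p v⟩ ⟨w, rfl, rfl⟩

theorem length_blockWord_count (x : Bool) (w : List Bool) :
    (blockWord x (w.count x) (w.count (!x))).length = w.length := by
  rw [blockWord, List.length_append, List.length_replicate, List.length_replicate, add_comm,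
    List.count_not_add_count]

theorem optimal_of_two_runs_has_two_runs (p : List Bool) (hp : numRuns p = 2)
    (w : List Bool) (hM : 1 ≤ maxOcc w.length p)
    (hw : occ p w = maxOcc w.length p) :
    numRuns w = 2 := by
  obtain ⟨x, a, b, ha, hb, rfl⟩ := exists_eq_blockWord_of_numRuns_eq_two hp
  have hmax : (w.count x).choose a * (w.count (!x)).choose b ≤ occ (blockWord x a b) w := by
    rw [← occ_blockWord_blockWord, hw, ← length_blockWord_count x w]
    exact occ_le_maxOcc _ _
  have hpos : 0 < (w.count x).choose a * (w.count (!x)).choose b :=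
    calc 0 < occ (blockWord x a b) w := hM.trans_eq hw.symm
      _ ≤ _ := occ_blockWord_le x a b w
  obtain ⟨hxa, hxb⟩ : a ≤ w.count x ∧ b ≤ w.count (!x) := by
    simpa [Nat.pos_iff_ne_zero, Nat.choose_eq_zero_iff] using hpos
  rcases eq_blockWord_or_sublist x w with hsorted | hdesc
  · rw [hsorted]
    exact numRuns_blockWord x (ha.trans hxa) (hb.trans hxb)
  · exact absurd hmax (not_le.2 (occ_blockWord_lt x ha hb hxa hxb hdesc))
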